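/- arXiv:2006.10105 — 4 statements merged into one kernel-verified Lean document; each statement's English description precedes it below -/
import Mathlib

section
/- For α ∈ 𝔰𝔲(2) and ℓ ∈ AN define α◁ℓ := P_su(ℓ⁻¹αℓ), where P_su is the projection of 𝔰𝔩(2,ℂ) onto 𝔰𝔲(2) along the direct sum decomposition 𝔰𝔩(2,ℂ) = 𝔰𝔲(2) ⊕ 𝔞𝔫, and set δ_α(ℓ) := αℓ − ℓ(α◁ℓ). Then for all α ∈ 𝔰𝔲(2) and ℓ₁, ℓ₂ ∈ AN: (i) α◁(ℓ₁ℓ₂) = (α◁ℓ₁)◁ℓ₂, and (ii) the twisted Leibniz rule δ_α(ℓ₁ℓ₂) = (δ_α ℓ₁)·ℓ₂ + ℓ₁·(δ_{α◁ℓ₁} ℓ₂) holds. -/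
open Matrix

/-- `l` is an element of AN: a 2×2 complex matrix of the form
`[[λ, 0], [z, λ⁻¹]]` with `λ > 0` real and `z ∈ ℂ`. -/
def isAN (l : Matrix (Fin 2) (Fin 2) ℂ) : Prop :=
  ∃ (lam : ℝ) (z : ℂ), 0 < lam ∧ l = !![(lam : ℂ), 0; z, (lam : ℂ)⁻¹]

/-- `X ∈ 𝔰𝔲(2)`: a traceless skew-Hermitian 2×2 complex matrix. -/
def inSU2lie (X : Matrix (Fin 2) (Fin 2) ℂ) : Prop :=
  X.trace = 0 ∧ X.conjTranspose = -X

/-- `X ∈ 𝔞𝔫`: a matrix of the form `[[a, 0], [z, -a]]` with `a ∈ ℝ`, `z ∈ ℂ`. -/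
def inANlie (X : Matrix (Fin 2) (Fin 2) ℂ) : Prop :=
  ∃ (a : ℝ) (z : ℂ), X = !![(a : ℂ), 0; z, -(a : ℂ)]

/-- The right action `α ◁ ℓ := P_su(ℓ⁻¹ α ℓ)` of AN on 𝔰𝔲(2). -/
noncomputable def actBack (Psu : Matrix (Fin 2) (Fin 2) ℂ → Matrix (Fin 2) (Fin 2) ℂ)
    (α l : Matrix (Fin 2) (Fin 2) ℂ) : Matrix (Fin 2) (Fin 2) ℂ :=
  Psu (l⁻¹ * α * l)

/-- The vector field `δ_α(ℓ) := α ℓ − ℓ (α ◁ ℓ)`. -/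
noncomputable def deltaRot (Psu : Matrix (Fin 2) (Fin 2) ℂ → Matrix (Fin 2) (Fin 2) ℂ)
    (α l : Matrix (Fin 2) (Fin 2) ℂ) : Matrix (Fin 2) (Fin 2) ℂ :=
  α * l - l * actBack Psu α l

/-! The only input is that `𝔰𝔲(2) ∩ 𝔞𝔫 = 0` and that `𝔞𝔫` is stable under conjugation by `AN`.
Then `Psu` is constant on cosets of `𝔞𝔫`, and `ℓ₂⁻¹ ℓ₁⁻¹ α ℓ₁ ℓ₂` and `ℓ₂⁻¹ (α◁ℓ₁) ℓ₂` differ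
by the `ℓ₂`-conjugate of `ℓ₁⁻¹ α ℓ₁ - α◁ℓ₁ ∈ 𝔞𝔫`, which gives the action property. The twisted
Leibniz rule is then a formal consequence of it. -/

section Decomposition

variable {X Y : Matrix (Fin 2) (Fin 2) ℂ}

theorem inANlie.trace_eq_zero (h : inANlie X) : X.trace = 0 := by
  obtain ⟨a, z, rfl⟩ := h
  simp [trace_fin_two]

theorem inANlie.sub (hX : inANlie X) (hY : inANlie Y) : inANlie (X - Y) := by
  obtain ⟨a, z, rfl⟩ := hX
  obtain ⟨b, w, rfl⟩ := hY
  refine ⟨a - b, z - w, ?_⟩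
  ext i j
  fin_cases i <;> fin_cases j <;> simp [sub_eq_add_neg, add_comm]

theorem inSU2lie.sub (hX : inSU2lie X) (hY : inSU2lie Y) : inSU2lie (X - Y) :=
  ⟨by rw [trace_sub, hX.1, hY.1, sub_zero],
    by rw [conjTranspose_sub, hX.2, hY.2, neg_sub_neg, neg_sub]⟩

theorem eq_zero_of_inSU2lie_of_inANlie (hsu : inSU2lie X) (han : inANlie X) : X = 0 := by
  obtain ⟨a, z, rfl⟩ := han
  have hdiag := congrFun (congrFun hsu.2 0) 0
  have hz := congrFun (congrFun hsu.2 0) 1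
  simp only [Fin.isValue, conjTranspose_apply, of_apply, cons_val', cons_val_zero,
    cons_val_fin_one, RCLike.star_def, Complex.conj_ofReal, Matrix.neg_apply, cons_val_one,
    neg_zero, map_eq_zero] at hdiag hz
  have ha : (a : ℂ) = 0 := by linear_combination (1 / 2 : ℂ) * hdiag
  ext i j
  fin_cases i <;> fin_cases j <;> simp [ha, hz]

end Decomposition

theorem Psu_eq_of_sub_inANlie {Psu : Matrix (Fin 2) (Fin 2) ℂ → Matrix (Fin 2) (Fin 2) ℂ}
    (hPsu : ∀ X, X.trace = 0 → inSU2lie (Psu X) ∧ inANlie (X - Psu X))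
    {X Y : Matrix (Fin 2) (Fin 2) ℂ} (hX : X.trace = 0) (hXY : inANlie (X - Y)) :
    Psu X = Psu Y := by
  have hY : Y.trace = 0 := by
    rw [← sub_sub_cancel X Y, trace_sub, hX, hXY.trace_eq_zero, sub_zero]
  obtain ⟨suX, anX⟩ := hPsu X hX
  obtain ⟨suY, anY⟩ := hPsu Y hY
  have han : inANlie (Psu X - Psu Y) := by
    rw [show Psu X - Psu Y = (X - Y) - ((X - Psu X) - (Y - Psu Y)) by abel]
    exact hXY.sub (anX.sub anY)
  exact sub_eq_zero.mp (eq_zero_of_inSU2lie_of_inANlie (suX.sub suY) han)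

theorem inv_lowerTriangular_fin_two {K : Type*} [Field K] {lam : K} (hlam : lam ≠ 0) (z : K) :
    !![lam, 0; z, lam⁻¹]⁻¹ = !![lam⁻¹, 0; -z, lam] := by
  rw [inv_def, det_fin_two_of, adjugate_fin_two_of]
  simp [hlam]

theorem isAN.isUnit {l : Matrix (Fin 2) (Fin 2) ℂ} (hl : isAN l) : IsUnit l := by
  obtain ⟨lam, z, hlam, rfl⟩ := hl
  have hlam' : (lam : ℂ) ≠ 0 := by exact_mod_cast hlam.ne'
  rw [isUnit_iff_isUnit_det, det_fin_two_of]
  simp [hlam']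

theorem inANlie.inv_mul_mul_of_isAN {l N : Matrix (Fin 2) (Fin 2) ℂ} (hl : isAN l)
    (hN : inANlie N) : inANlie (l⁻¹ * N * l) := by
  obtain ⟨lam, z, hlam, rfl⟩ := hl
  obtain ⟨a, w, rfl⟩ := hN
  have hlam' : (lam : ℂ) ≠ 0 := by exact_mod_cast hlam.ne'
  refine ⟨a, lam ^ 2 * w - 2 * lam * a * z, ?_⟩
  rw [inv_lowerTriangular_fin_two hlam']
  ext i j
  fin_cases i <;> fin_cases j <;> simp [mul_apply, Fin.sum_univ_two] <;> field_simp; ring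

theorem deltaRot_mul_of_actBack_mul {Psu : Matrix (Fin 2) (Fin 2) ℂ → Matrix (Fin 2) (Fin 2) ℂ}
    {α l₁ l₂ : Matrix (Fin 2) (Fin 2) ℂ}
    (h : actBack Psu α (l₁ * l₂) = actBack Psu (actBack Psu α l₁) l₂) :
    deltaRot Psu α (l₁ * l₂) =
      deltaRot Psu α l₁ * l₂ + l₁ * deltaRot Psu (actBack Psu α l₁) l₂ := by
  simp only [deltaRot, h]
  noncomm_ring

/-- If `Psu` is the projection of 𝔰𝔩(2,ℂ) onto 𝔰𝔲(2) along 𝔰𝔩(2,ℂ) = 𝔰𝔲(2) ⊕ 𝔞𝔫,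
then `◁` is a right action: `α◁(ℓ₁ℓ₂) = (α◁ℓ₁)◁ℓ₂`, and the twisted Leibniz rule
`δ_α(ℓ₁ℓ₂) = (δ_α ℓ₁)ℓ₂ + ℓ₁(δ_{α◁ℓ₁} ℓ₂)` holds. -/
theorem twisted_leibniz
    (Psu : Matrix (Fin 2) (Fin 2) ℂ → Matrix (Fin 2) (Fin 2) ℂ)
    (hPsu : ∀ X, X.trace = 0 → inSU2lie (Psu X) ∧ inANlie (X - Psu X)) :
    ∀ α l₁ l₂, inSU2lie α → isAN l₁ → isAN l₂ →
      (actBack Psu α (l₁ * l₂) = actBack Psu (actBack Psu α l₁) l₂) ∧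
      (deltaRot Psu α (l₁ * l₂) =
        deltaRot Psu α l₁ * l₂ + l₁ * deltaRot Psu (actBack Psu α l₁) l₂) := by
  intro α l₁ l₂ hα h₁ h₂
  have hconj₁ : (l₁⁻¹ * α * l₁).trace = 0 := by rw [trace_conj' h₁.isUnit, hα.1]
  have hconj₁₂ : ((l₁ * l₂)⁻¹ * α * (l₁ * l₂)).trace = 0 := by
    rw [trace_conj' (h₁.isUnit.mul h₂.isUnit), hα.1]
  have haction : actBack Psu α (l₁ * l₂) = actBack Psu (actBack Psu α l₁) l₂ := by
    refine Psu_eq_of_sub_inANlie hPsu hconj₁₂ ?_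
    rw [show (l₁ * l₂)⁻¹ * α * (l₁ * l₂) - l₂⁻¹ * actBack Psu α l₁ * l₂ =
        l₂⁻¹ * (l₁⁻¹ * α * l₁ - actBack Psu α l₁) * l₂ by
      rw [Matrix.mul_inv_rev]; noncomm_ring]
    exact (hPsu _ hconj₁).2.inv_mul_mul_of_isAN h₂
  exact ⟨haction, deltaRot_mul_of_actBack_mul haction⟩
end

section
/- Fix σ ∈ {1, −1} and n ∈ ℝ³. The bracket [φ, ψ]_n := (φ ×σ ψ) ×σ n on ℝ³ is ℝ-bilinear, antisymmetric, and satisfies the Jacobi identity [φ,[ψ,χ]_n]_n + [ψ,[χ,φ]_n]_n + [χ,[φ,ψ]_n]_n = 0; hence (ℝ³, [·,·]_n) is a real Lie algebra (the Lie algebra 𝔞𝔫 of the paper). -/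
/-- The σ-cross product on ℝ³. -/
def crossS (σ : ℝ) (a b : Fin 3 → ℝ) : Fin 3 → ℝ :=
  ![a 1 * b 2 - a 2 * b 1,
    a 2 * b 0 - a 0 * b 2,
    σ * (a 0 * b 1 - a 1 * b 0)]

/-- The 𝔞𝔫 bracket `[φ, ψ]_n := (φ ×σ ψ) ×σ n` on ℝ³. -/
def anBracket (σ : ℝ) (n φ ψ : Fin 3 → ℝ) : Fin 3 → ℝ :=
  crossS σ (crossS σ φ ψ) n

/-- For σ = ±1 and any `n ∈ ℝ³`, the bracket `[φ,ψ]_n := (φ ×σ ψ) ×σ n` is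
ℝ-bilinear, antisymmetric, and satisfies the Jacobi identity: `(ℝ³, [·,·]_n)`
is a real Lie algebra (the Lie algebra 𝔞𝔫). -/
theorem an_bracket_lie_algebra (σ : ℝ) (hσ : σ = 1 ∨ σ = -1) (n : Fin 3 → ℝ) :
    (∀ (a : ℝ) (φ φ' ψ : Fin 3 → ℝ),
      anBracket σ n (a • φ + φ') ψ = a • anBracket σ n φ ψ + anBracket σ n φ' ψ) ∧
    (∀ (a : ℝ) (φ ψ ψ' : Fin 3 → ℝ),
      anBracket σ n φ (a • ψ + ψ') = a • anBracket σ n φ ψ + anBracket σ n φ ψ') ∧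
    (∀ φ ψ : Fin 3 → ℝ, anBracket σ n φ ψ = -anBracket σ n ψ φ) ∧
    (∀ φ ψ χ : Fin 3 → ℝ,
      anBracket σ n φ (anBracket σ n ψ χ)
        + anBracket σ n ψ (anBracket σ n χ φ)
        + anBracket σ n χ (anBracket σ n φ ψ) = 0) := by
  rcases hσ with rfl | rfl <;>
  refine ⟨?_, ?_, ?_, ?_⟩ <;> intros <;> funext i <;> fin_cases i <;>
    simp [anBracket, crossS, Pi.add_apply, Pi.smul_apply, smul_eq_mul] <;> ring
end

section
/- Fix σ ∈ {1, −1} and Λ ∈ ℝ. On V = ℝ³ × ℝ³ define the bracket [(α,φ),(β,ψ)] := (α ×σ β + σΛ (φ ×σ ψ), α ×σ ψ + φ ×σ β). Then this bracket is ℝ-bilinear, antisymmetric, and satisfies the Jacobi identity, so V is a real Lie algebra (the charge algebra 𝔡_{σs}). Moreover, if n ∈ ℝ³ satisfies n ·σ n = −Λ, then setting J(α) := (α, 0) and P′(φ) := (φ ×σ n, φ), one has for all α, β, φ, ψ ∈ ℝ³: [J(α), J(β)] = J(α ×σ β); [P′(φ), P′(ψ)] = P′((φ ×σ ψ) ×σ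 n) (so the deformed translation generators close into a subalgebra); and [J(α), P′(φ)] = P′(α ×σ φ) + J(φ ×σ (α ×σ n)). -/
def dotS (σ : ℝ) (a b : Fin 3 → ℝ) : ℝ :=
  a 0 * b 0 + a 1 * b 1 + σ * (a 2 * b 2)

def dBracket (σ Λ : ℝ) (x y : (Fin 3 → ℝ) × (Fin 3 → ℝ)) :
    (Fin 3 → ℝ) × (Fin 3 → ℝ) :=
  (crossS σ x.1 y.1 + (σ * Λ) • crossS σ x.2 y.2,
   crossS σ x.1 y.2 + crossS σ x.2 y.1)

lemma crossS0 (σ : ℝ) (a b : Fin 3 → ℝ) : crossS σ a b 0 = a 1 * b 2 - a 2 * b 1 := rfl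
lemma crossS1 (σ : ℝ) (a b : Fin 3 → ℝ) : crossS σ a b 1 = a 2 * b 0 - a 0 * b 2 := rfl
lemma crossS2 (σ : ℝ) (a b : Fin 3 → ℝ) : crossS σ a b 2 = σ * (a 0 * b 1 - a 1 * b 0) := rfl

/-- The bracket on `V = ℝ³ × ℝ³` is ℝ-bilinear, antisymmetric and satisfies the
Jacobi identity, so `V` is a real Lie algebra (the charge algebra 𝔡_{σs}).
Moreover, if `n ·σ n = −Λ` then with `J(α) := (α,0)` and `P′(φ) := (φ ×σ n, φ)`:
`[J(α),J(β)] = J(α ×σ β)`, `[P′(φ),P′(ψ)] = P′((φ ×σ ψ) ×σ n)` (closure of the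
deformed translations), and `[J(α),P′(φ)] = P′(α ×σ φ) + J(φ ×σ (α ×σ n))`. -/
theorem charge_algebra (σ : ℝ) (hσ : σ = 1 ∨ σ = -1) (Λ : ℝ) :
    ((∀ (a : ℝ) (x x' y : (Fin 3 → ℝ) × (Fin 3 → ℝ)),
        dBracket σ Λ (a • x + x') y = a • dBracket σ Λ x y + dBracket σ Λ x' y) ∧
     (∀ (a : ℝ) (x y y' : (Fin 3 → ℝ) × (Fin 3 → ℝ)),
        dBracket σ Λ x (a • y + y') = a • dBracket σ Λ x y + dBracket σ Λ x y') ∧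
     (∀ x y : (Fin 3 → ℝ) × (Fin 3 → ℝ), dBracket σ Λ x y = -dBracket σ Λ y x) ∧
     (∀ x y z : (Fin 3 → ℝ) × (Fin 3 → ℝ),
        dBracket σ Λ x (dBracket σ Λ y z) + dBracket σ Λ y (dBracket σ Λ z x)
          + dBracket σ Λ z (dBracket σ Λ x y) = 0)) ∧
    (∀ n : Fin 3 → ℝ, dotS σ n n = -Λ →
      (∀ α β : Fin 3 → ℝ, dBracket σ Λ (α, 0) (β, 0) = (crossS σ α β, 0)) ∧
      (∀ φ ψ : Fin 3 → ℝ,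
        dBracket σ Λ (crossS σ φ n, φ) (crossS σ ψ n, ψ)
          = (crossS σ (crossS σ (crossS σ φ ψ) n) n, crossS σ (crossS σ φ ψ) n)) ∧
      (∀ α φ : Fin 3 → ℝ,
        dBracket σ Λ (α, 0) (crossS σ φ n, φ)
          = (crossS σ (crossS σ α φ) n, crossS σ α φ)
            + (crossS σ φ (crossS σ α n), 0))) := by
  have hσ2 : σ * σ = 1 := by rcases hσ with rfl | rfl <;> norm_num
  constructor
  · refine ⟨?_, ?_, ?_, ?_⟩ <;>
    · intros
      refine Prod.ext (funext fun i => ?_) (funext fun i => ?_) <;>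
        fin_cases i <;>
        simp only [dBracket, Prod.fst_add, Prod.snd_add, Prod.smul_fst, Prod.smul_snd,
          Prod.fst_zero, Prod.snd_zero, Prod.fst_neg, Prod.snd_neg, Pi.add_apply,
          Pi.smul_apply, Pi.neg_apply, Pi.zero_apply, smul_eq_mul, Fin.isValue,
          Fin.zero_eta, Fin.mk_one, Fin.reduceFinMk, crossS0, crossS1, crossS2] <;>
        linear_combination (norm := ring_nf) (0 : ℝ) * hσ2
  · intro n hn
    have hΛ : Λ = -(n 0 * n 0 + n 1 * n 1 + σ * (n 2 * n 2)) := by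
      simp [dotS] at hn; linarith
    subst hΛ
    refine ⟨?_, ?_, ?_⟩ <;>
    · intros
      refine Prod.ext (funext fun i => ?_) (funext fun i => ?_) <;>
        fin_cases i <;>
        simp only [dBracket, Prod.mk_add_mk, Prod.fst_add, Prod.snd_add, Prod.smul_fst,
          Prod.smul_snd, Prod.fst_zero, Prod.snd_zero, Pi.add_apply, Pi.smul_apply,
          Pi.zero_apply, smul_eq_mul, Fin.isValue, Fin.zero_eta, Fin.mk_one,
          Fin.reduceFinMk, crossS0, crossS1, crossS2] <;>
        rcases hσ with rfl | rfl <;> ring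
end

section
/- Let A be a commutative unital ℂ-algebra equipped with a ℂ-bilinear, antisymmetric bracket {·,·} : A × A → A satisfying the Leibniz rule {a, bc} = {a,b}c + b{a,c}. Let γ ∈ ℝ, let λ ∈ A be invertible, and let z, w ∈ A. Define the 2×2 matrices ℓ := [[λ, 0], [z, λ⁻¹]] and ℓ̄ := [[λ⁻¹, −w], [0, λ]] over A, and the 4×4 scalar matrix r₋ := (iγ/4)[[−1,0,0,0],[0,1,0,0],[0,−4,1,0],[0,0,0,−1]]. For 2×2 matrices M, N over A let {M₁, N₂} denote the 4×4 matrix with ((i,k),(j,l)) entry {M_{ij}, N_{kl}}. Then the three matrix Poisson relations {ℓ₁, ℓ₂} = [r₋, ℓ ⊗ ℓ], {ℓ̄₁, ℓ̄₂} = [r₋, ℓ̄ ⊗ ℓ̄], and {ℓ₁, ℓ̄₂} = [r₋, ℓ ⊗ ℓ̄] hold if and only if the coordinate brackets {λ, z} = (iγ/2) z λ, {λ, w} = −(iγ/2) w λ, and {w, z} = −iγ(λ² − λ⁻²) hold. -/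
open Matrix Kronecker

/-- The identification of the index set `Fin 2 × Fin 2` with `Fin 4` in the
order (11, 12, 21, 22). -/
def pidx : Fin 2 × Fin 2 → Fin 4 :=
  fun p => ⟨2 * p.1.val + p.2.val, by have := p.1.isLt; have := p.2.isLt; omega⟩

/-- The classical r-matrix `r₋ = (iγ/4)[[−1,0,0,0],[0,1,0,0],[0,−4,1,0],[0,0,0,−1]]`,
indexed by `Fin 2 × Fin 2` in the order (11,12,21,22). -/
noncomputable def rMinusMat (γ : ℝ) : Matrix (Fin 2 × Fin 2) (Fin 2 × Fin 2) ℂ :=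
  (Complex.I * γ / 4) •
    ((!![-1, 0, 0, 0;
         0, 1, 0, 0;
         0, -4, 1, 0;
         0, 0, 0, -1] : Matrix (Fin 4) (Fin 4) ℂ).submatrix pidx pidx)

/-- For 2×2 matrices `M`, `N` over `A`, the 4×4 matrix `{M₁, N₂}` with
entry `((i,k),(j,l))` given by `{M_{ij}, N_{kl}}`. -/
def pbMat {A : Type*} (pb : A → A → A) (M N : Matrix (Fin 2) (Fin 2) A) :
    Matrix (Fin 2 × Fin 2) (Fin 2 × Fin 2) A :=
  Matrix.of fun p r => pb (M p.1 r.1) (N p.2 r.2)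

set_option maxHeartbeats 2000000 in
/-- For a Poisson bracket on a commutative ℂ-algebra, the matrix Poisson
relations `{ℓ₁,ℓ₂} = [r₋, ℓ⊗ℓ]`, `{ℓ̄₁,ℓ̄₂} = [r₋, ℓ̄⊗ℓ̄]`, `{ℓ₁,ℓ̄₂} = [r₋, ℓ⊗ℓ̄]`
hold if and only if the coordinate brackets `{λ,z} = (iγ/2)zλ`,
`{λ,w} = −(iγ/2)wλ`, `{w,z} = −iγ(λ² − λ⁻²)` hold. -/
theorem matrix_poisson_iff_coordinate_brackets {A : Type*} [CommRing A] [Algebra ℂ A]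
    (pb : A → A → A)
    (haddl : ∀ a b c : A, pb (a + b) c = pb a c + pb b c)
    (haddr : ∀ a b c : A, pb a (b + c) = pb a b + pb a c)
    (hsmull : ∀ (c : ℂ) (a b : A), pb (c • a) b = c • pb a b)
    (hsmulr : ∀ (c : ℂ) (a b : A), pb a (c • b) = c • pb a b)
    (hanti : ∀ a b : A, pb a b = -pb b a)
    (hleib : ∀ a b c : A, pb a (b * c) = pb a b * c + b * pb a c)
    (γ : ℝ) (lam laminv z w : A) (hlam : lam * laminv = 1) :
    (let l : Matrix (Fin 2) (Fin 2) A := !![lam, 0; z, laminv]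
     let lb : Matrix (Fin 2) (Fin 2) A := !![laminv, -w; 0, lam]
     let rm : Matrix (Fin 2 × Fin 2) (Fin 2 × Fin 2) A :=
       (rMinusMat γ).map (algebraMap ℂ A)
     pbMat pb l l = rm * (l ⊗ₖ l) - (l ⊗ₖ l) * rm ∧
     pbMat pb lb lb = rm * (lb ⊗ₖ lb) - (lb ⊗ₖ lb) * rm ∧
     pbMat pb l lb = rm * (l ⊗ₖ lb) - (l ⊗ₖ lb) * rm)
    ↔ (pb lam z = (Complex.I * γ / 2) • (z * lam) ∧
       pb lam w = (-(Complex.I * γ / 2)) • (w * lam) ∧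
       pb w z = (-(Complex.I * γ)) • (lam * lam - laminv * laminv)) := by
  have hK2 : (algebraMap ℂ A) (Complex.I * ↑γ / 2)
      = 2 * (algebraMap ℂ A) (Complex.I * ↑γ / 4) := by
    rw [← map_ofNat (algebraMap ℂ A) 2, ← _root_.map_mul]
    congr 1
    ring
  have hK4 : (algebraMap ℂ A) (Complex.I * (↑γ : ℂ))
      = 4 * (algebraMap ℂ A) (Complex.I * ↑γ / 4) := by
    rw [← map_ofNat (algebraMap ℂ A) 4, ← _root_.map_mul]
    congr 1
    ring
  have hself : ∀ a : A, pb a a = 0 := by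
    intro a
    have h2 : pb a a + pb a a = 0 := by linear_combination hanti a a
    have := congrArg (fun x => ((2:ℂ)⁻¹) • x) h2
    simpa [← two_smul ℂ (pb a a), smul_smul] using this
  have h0r : ∀ a : A, pb a 0 = 0 := by
    intro a
    have h := haddr a 0 0
    simp only [add_zero] at h
    exact (left_eq_add.mp h)
  have h0l : ∀ a : A, pb 0 a = 0 := by
    intro a; rw [hanti, h0r, neg_zero]
  have h1r : ∀ a : A, pb a 1 = 0 := by
    intro a
    have h := hleib a 1 1
    simp only [mul_one, one_mul] at h
    exact (left_eq_add.mp h)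
  have h1l : ∀ a : A, pb 1 a = 0 := by
    intro a; rw [hanti, h1r, neg_zero]
  have hnegr : ∀ a b : A, pb a (-b) = -pb a b := by
    intro a b
    have h := haddr a b (-b)
    rw [add_neg_cancel, h0r] at h
    linear_combination -h
  have hnegl : ∀ a b : A, pb (-a) b = -pb a b := by
    intro a b
    linear_combination hanti (-a) b - hnegr b a + hanti a b
  have hleibl : ∀ a b c : A, pb (a * b) c = pb a c * b + a * pb b c := by
    intro a b c
    rw [hanti, hleib, hanti c a, hanti c b]; ring
  have hinv : ∀ a : A, pb laminv a = -(laminv * laminv * pb lam a) := by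
    intro a
    have hE := hleibl lam laminv a
    rw [hlam, h1l] at hE
    linear_combination (-(pb laminv a)) * hlam + (-laminv) * hE
  have hlaminvlam : pb laminv lam = 0 := by
    rw [hinv, hself]; ring
  have hlamlaminv : pb lam laminv = 0 := by
    rw [hanti, hlaminvlam, neg_zero]
  constructor
  · rintro ⟨h1, h2, h3⟩
    have e1 := congrFun (congrFun h1 ((0,1))) ((0,0))
    have e2 := congrFun (congrFun h2 ((1,0))) ((1,1))
    have e3 := congrFun (congrFun h3 ((1,0))) ((0,1))
    simp only [pbMat, rMinusMat, pidx, Matrix.mul_apply, Matrix.sub_apply, Matrix.of_apply,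
      Matrix.map_apply, Matrix.kroneckerMap_apply, Fintype.sum_prod_type, Fin.sum_univ_two,
      Matrix.smul_apply, smul_eq_mul, Matrix.submatrix_apply, _root_.map_mul, _root_.map_neg,
      map_ofNat, _root_.map_one, _root_.map_zero] at e1 e2 e3
    simp [Matrix.vecHead, Matrix.vecTail, map_ofNat] at e1 e2 e3
    refine ⟨?_, ?_, ?_⟩
    · rw [Algebra.smul_def, hK2]
      linear_combination e1
    · rw [Algebra.smul_def, _root_.map_neg, hK2]
      have hX := hnegr lam w
      linear_combination hX - e2
    · rw [Algebra.smul_def, _root_.map_neg, hK4]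
      have hzw := hnegr z w
      have haw := hanti w z
      linear_combination haw - hzw + e3
  · rintro ⟨hz, hw, hwz⟩
    have t1 : pb lam z = 2 * (algebraMap ℂ A) (Complex.I * ↑γ / 4) * (z * lam) := by
      rw [hz, Algebra.smul_def, hK2]; try ring
    have t2 : pb z lam = -(2 * (algebraMap ℂ A) (Complex.I * ↑γ / 4) * (z * lam)) := by
      rw [hanti, t1]
    have t3 : pb lam w = -(2 * (algebraMap ℂ A) (Complex.I * ↑γ / 4) * (w * lam)) := by
      rw [hw, Algebra.smul_def, _root_.map_neg, hK2]; try ring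
    have t4 : pb w lam = 2 * (algebraMap ℂ A) (Complex.I * ↑γ / 4) * (w * lam) := by
      rw [hanti, t3, neg_neg]
    have t5 : pb laminv z = -(2 * (algebraMap ℂ A) (Complex.I * ↑γ / 4) * (z * laminv)) := by
      rw [hinv, t1]
      linear_combination (-(2 * (algebraMap ℂ A) (Complex.I * ↑γ / 4) * (z * laminv))) * hlam
    have t6 : pb z laminv = 2 * (algebraMap ℂ A) (Complex.I * ↑γ / 4) * (z * laminv) := by
      rw [hanti, t5, neg_neg]
    have t7 : pb laminv w = 2 * (algebraMap ℂ A) (Complex.I * ↑γ / 4) * (w * laminv) := by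
      rw [hinv, t3]
      linear_combination (2 * (algebraMap ℂ A) (Complex.I * ↑γ / 4) * (w * laminv)) * hlam
    have t8 : pb w laminv = -(2 * (algebraMap ℂ A) (Complex.I * ↑γ / 4) * (w * laminv)) := by
      rw [hanti, t7]
    have t9 : pb w z = -(4 * (algebraMap ℂ A) (Complex.I * ↑γ / 4)
        * (lam * lam - laminv * laminv)) := by
      rw [hwz, Algebra.smul_def, _root_.map_neg, hK4]; try ring
    have t10 : pb z w = 4 * (algebraMap ℂ A) (Complex.I * ↑γ / 4)
        * (lam * lam - laminv * laminv) := by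
      rw [hanti, t9, neg_neg]
    have P1 : pbMat pb !![lam, 0; z, laminv] !![lam, 0; z, laminv]
        = (rMinusMat γ).map (algebraMap ℂ A)
            * (!![lam, 0; z, laminv] ⊗ₖ !![lam, 0; z, laminv])
          - (!![lam, 0; z, laminv] ⊗ₖ !![lam, 0; z, laminv])
            * (rMinusMat γ).map (algebraMap ℂ A) := by
      ext ⟨i, k⟩ ⟨j, m⟩
      fin_cases i <;> fin_cases k <;> fin_cases j <;> fin_cases m <;>
      · simp [pbMat, rMinusMat, pidx, Matrix.mul_apply, Matrix.sub_apply,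
          Fintype.sum_prod_type, Fin.sum_univ_two, Matrix.smul_apply, smul_eq_mul,
          Matrix.submatrix_apply, Matrix.vecHead, Matrix.vecTail, map_ofNat,
          hnegr, hnegl, h0r, h0l, hself, hlamlaminv, hlaminvlam,
          t1, t2, t3, t4, t5, t6, t7, t8, t9, t10]
        try ring
    have P2 : pbMat pb !![laminv, -w; 0, lam] !![laminv, -w; 0, lam]
        = (rMinusMat γ).map (algebraMap ℂ A)
            * (!![laminv, -w; 0, lam] ⊗ₖ !![laminv, -w; 0, lam])
          - (!![laminv, -w; 0, lam] ⊗ₖ !![laminv, -w; 0, lam])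
            * (rMinusMat γ).map (algebraMap ℂ A) := by
      ext ⟨i, k⟩ ⟨j, m⟩
      fin_cases i <;> fin_cases k <;> fin_cases j <;> fin_cases m <;>
      · simp [pbMat, rMinusMat, pidx, Matrix.mul_apply, Matrix.sub_apply,
          Fintype.sum_prod_type, Fin.sum_univ_two, Matrix.smul_apply, smul_eq_mul,
          Matrix.submatrix_apply, Matrix.vecHead, Matrix.vecTail, map_ofNat,
          hnegr, hnegl, h0r, h0l, hself, hlamlaminv, hlaminvlam,
          t1, t2, t3, t4, t5, t6, t7, t8, t9, t10]
        try ring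
    have P3 : pbMat pb !![lam, 0; z, laminv] !![laminv, -w; 0, lam]
        = (rMinusMat γ).map (algebraMap ℂ A)
            * (!![lam, 0; z, laminv] ⊗ₖ !![laminv, -w; 0, lam])
          - (!![lam, 0; z, laminv] ⊗ₖ !![laminv, -w; 0, lam])
            * (rMinusMat γ).map (algebraMap ℂ A) := by
      ext ⟨i, k⟩ ⟨j, m⟩
      fin_cases i <;> fin_cases k <;> fin_cases j <;> fin_cases m <;>
      · simp [pbMat, rMinusMat, pidx, Matrix.mul_apply, Matrix.sub_apply,
          Fintype.sum_prod_type, Fin.sum_univ_two, Matrix.smul_apply, smul_eq_mul,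
          Matrix.submatrix_apply, Matrix.vecHead, Matrix.vecTail, map_ofNat,
          hnegr, hnegl, h0r, h0l, hself, hlamlaminv, hlaminvlam,
          t1, t2, t3, t4, t5, t6, t7, t8, t9, t10]
        try ring
    exact ⟨P1, P2, P3⟩
end
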